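/- arXiv:1202.4985 — 3 statements merged into one kernel-verified Lean document; each statement's English description precedes it below -/
import Mathlib

section
/- Let (Y, d_H) be a metric space, π : D → Y a map, and h : D → (0, M] with M > 0. The function g(p,q) := 2 log((d_H(π(p),π(q)) + max(h(p),h(q)))/√(h(p)h(q))) satisfies the triangle inequality: g(p,r) ≤ g(p,q) + g(q,r) for all p,q,r ∈ D. -/
/-!
Write `ρ(p, q) = (d_H(π p, π q) + max (h p) (h q)) / √(h p h q)`, so that `g = 2 log ρ`; the triangle
inequality for `g` is submultiplicativity `ρ(p, r) ≤ ρ(p, q) ρ(q, r)`. Since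
`√(h p h q) √(h q h r) = h q √(h p h r)`, this amounts to
`(d(p, r) + max (h p) (h r)) h q ≤ (d(p, q) + max (h p) (h q)) (d(q, r) + max (h q) (h r))`,
which follows by expanding the right side, using the triangle inequality for `d_H` on the linear
terms and `h q · max (h p) (h r) ≤ max (h p) (h q) · max (h q) (h r)` on the constant term.
-/

lemma mul_max_le_max_mul_max {x y z : ℝ} (hy : 0 ≤ y) :
    y * max x z ≤ max x y * max y z := by
  have hxy : 0 ≤ max x y := hy.trans (le_max_right x y)
  have hyz : 0 ≤ max y z := hy.trans (le_max_left y z)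
  rw [mul_max_of_nonneg _ _ hy]
  refine max_le ?_ ?_
  · rw [mul_comm]
    exact mul_le_mul (le_max_left x y) (le_max_left y z) hy hxy
  · rw [mul_comm, mul_comm (max x y)]
    exact mul_le_mul (le_max_right y z) (le_max_right x y) hy hyz

lemma add_max_mul_le_mul_add_max {d₁ d₂ d₃ x y z : ℝ} (h₁ : 0 ≤ d₁) (h₂ : 0 ≤ d₂)
    (htri : d₃ ≤ d₁ + d₂) (hy : 0 ≤ y) :
    (d₃ + max x z) * y ≤ (d₁ + max x y) * (d₂ + max y z) := by
  have hmax := mul_max_le_max_mul_max (x := x) (z := z) hy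
  have hd₁ : d₁ * y ≤ d₁ * max y z := mul_le_mul_of_nonneg_left (le_max_left y z) h₁
  have hd₂ : y * d₂ ≤ max x y * d₂ := mul_le_mul_of_nonneg_right (le_max_right x y) h₂
  have hd₃ : d₃ * y ≤ (d₁ + d₂) * y := mul_le_mul_of_nonneg_right htri hy
  linarith [mul_nonneg h₁ h₂]

lemma sqrt_mul_mul_sqrt_mul {x y z : ℝ} (hx : 0 ≤ x) (hy : 0 ≤ y) :
    √(x * y) * √(y * z) = y * √(x * z) := by
  rw [Real.sqrt_mul hx, Real.sqrt_mul hy, Real.sqrt_mul hx]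
  linear_combination √x * √z * Real.mul_self_sqrt hy

lemma div_sqrt_le_div_sqrt_mul_div_sqrt {Y : Type*} [PseudoMetricSpace Y] (u v w : Y)
    {x y z : ℝ} (hx : 0 < x) (hy : 0 < y) (hz : 0 < z) :
    (dist u w + max x z) / √(x * z) ≤
      (dist u v + max x y) / √(x * y) * ((dist v w + max y z) / √(y * z)) := by
  have hxz : 0 < √(x * z) := Real.sqrt_pos.mpr (mul_pos hx hz)
  rw [div_mul_div_comm, sqrt_mul_mul_sqrt_mul hx.le hy.le,
    div_le_div_iff₀ hxz (mul_pos hy hxz), ← mul_assoc]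
  exact mul_le_mul_of_nonneg_right
    (add_max_mul_le_mul_add_max dist_nonneg dist_nonneg (dist_triangle u v w) hy.le) hxz.le

theorem balogh_bonk_triangle_general {D Y : Type*} [MetricSpace Y]
    (π : D → Y) (h : D → ℝ)
    (hpos : ∀ p, 0 < h p)
    (g : D → D → ℝ)
    (hg : ∀ p q, g p q =
      2 * Real.log ((dist (π p) (π q) + max (h p) (h q)) / Real.sqrt (h p * h q))) :
    ∀ p q r : D, g p r ≤ g p q + g q r := by
  intro p q r
  have hρ : ∀ p q, 0 < (dist (π p) (π q) + max (h p) (h q)) / √(h p * h q) := fun p q => by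
    have := hpos p
    have := hpos q
    positivity
  have hlog := Real.log_le_log (hρ p r)
    (div_sqrt_le_div_sqrt_mul_div_sqrt (π p) (π q) (π r) (hpos p) (hpos q) (hpos r))
  rw [Real.log_mul (hρ p q).ne' (hρ q r).ne'] at hlog
  rw [hg, hg, hg]
  linarith

/-- The Balogh–Bonk function satisfies the triangle inequality. -/
theorem balogh_bonk_triangle {D Y : Type*} [MetricSpace Y]
    (π : D → Y) (h : D → ℝ) (M : ℝ) (hM : 0 < M)
    (hpos : ∀ p, 0 < h p) (hbdd : ∀ p, h p ≤ M)
    (g : D → D → ℝ)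
    (hg : ∀ p q, g p q =
      2 * Real.log ((dist (π p) (π q) + max (h p) (h q)) / Real.sqrt (h p * h q))) :
    ∀ p q r : D, g p r ≤ g p q + g q r :=
  balogh_bonk_triangle_general π h hpos g hg
end

section
/- Let (Y, d_H) be a metric space, π : D → Y, and h : D → (0,∞). Then the function g(p,q) := 2 log((d_H(π(p),π(q)) + max(h(p),h(q)))/√(h(p)h(q))) satisfies the four-point Gromov hyperbolicity condition: there exists δ ≥ 0 such that g(x,y) + g(z,w) ≤ max(g(x,z) + g(y,w), g(x,w) + g(y,z)) + 2δ for all x,y,z,w ∈ D. -/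
/-!
Write `ρ p q = d_H(π p, π q) + max (h p) (h q)`, so that
`g p q = 2 log ρ(p, q) - log h(p) - log h(q)`. The terms `- log h(p) - log h(q)` cancel out of
the four-point condition, and `ρ` satisfies the triangle inequality. For any positive symmetric
function with the triangle inequality,
`ρ(x,y) ρ(z,w) ≤ 4 max (ρ(x,z) ρ(y,w)) (ρ(x,w) ρ(y,z))`, whose logarithm is the four-point
condition for `2 log ρ` with `δ = log 4`.
-/

-- `open Real` is kept out of the main theorem, whose binder `π` would clash with `Real.pi`.
section

open Real

variable {D : Type*}

/-- The four-point form of Gromov hyperbolicity of a kernel `g` with constant `δ`. -/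
def FourPointCondition (g : D → D → ℝ) (δ : ℝ) : Prop :=
  ∀ x y z w, g x y + g z w ≤ max (g x z + g y w) (g x w + g y z) + 2 * δ

theorem FourPointCondition.add_add {g : D → D → ℝ} {δ : ℝ}
    (hg : FourPointCondition g δ) (f : D → ℝ) :
    FourPointCondition (fun p q => g p q + f p + f q) δ := by
  intro x y z w
  calc g x y + f x + f y + (g z w + f z + f w)
      = g x y + g z w + (f x + f y + f z + f w) := by ring
    _ ≤ max (g x z + g y w) (g x w + g y z) + 2 * δ + (f x + f y + f z + f w) := by
      linarith [hg x y z w]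
    _ = max (g x z + f x + f z + (g y w + f y + f w)) (g x w + f x + f w + (g y z + f y + f z))
        + 2 * δ := by
      rw [add_right_comm, ← max_add_add_right]
      congr 2 <;> ring

-- If `c` is the largest of `c, c', d, d'`, then `a * b ≤ (c' + d) * (d + d')` and each of the
-- four products on the right is at most `max (c * d) (c' * d')`; the other cases are symmetric.
theorem mul_le_four_mul_max_of_le_add {a b c c' d d' : ℝ} (hc : 0 ≤ c) (hc' : 0 ≤ c')
    (hd : 0 ≤ d) (hd' : 0 ≤ d') (hb : 0 ≤ b) (ha₁ : a ≤ c + d') (ha₂ : a ≤ c' + d)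
    (hb₁ : b ≤ c + c') (hb₂ : b ≤ d + d') :
    a * b ≤ 4 * max (c * d) (c' * d') := by
  rcases le_total (c * d) (c' * d') with hM | hM <;>
    simp only [hM, max_eq_left, max_eq_right] <;>
    rcases le_total c d' with hcd' | hcd' <;> rcases le_total c' d with hc'd | hc'd <;>
    nlinarith [mul_le_mul_of_nonneg_right ha₁ hb, mul_le_mul_of_nonneg_right ha₂ hb,
      mul_le_mul_of_nonneg_left hb₁ (add_nonneg hc hd'),
      mul_le_mul_of_nonneg_left hb₂ (add_nonneg hc hd'),
      mul_le_mul_of_nonneg_left hb₁ (add_nonneg hc' hd),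
      mul_le_mul_of_nonneg_left hb₂ (add_nonneg hc' hd),
      mul_nonneg hc hd, mul_nonneg hc' hd', mul_nonneg hc hc', mul_nonneg hd hd',
      mul_nonneg hc hd', mul_nonneg hc' hd]

theorem two_mul_log_add_two_mul_log_le {a b c d : ℝ} (ha : 0 < a) (hb : 0 < b) (hc : 0 < c)
    (hd : 0 < d) (h : a * b ≤ 4 * (c * d)) :
    2 * log a + 2 * log b ≤ 2 * log c + 2 * log d + 2 * log 4 := by
  have := log_le_log (mul_pos ha hb) h
  rw [log_mul ha.ne' hb.ne', log_mul (by norm_num) (mul_pos hc hd).ne',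
    log_mul hc.ne' hd.ne'] at this
  linarith

theorem fourPointCondition_two_mul_log {ρ : D → D → ℝ} (hpos : ∀ p q, 0 < ρ p q)
    (hsymm : ∀ p q, ρ p q = ρ q p) (htri : ∀ p q r, ρ p q ≤ ρ p r + ρ r q) :
    FourPointCondition (fun p q => 2 * log (ρ p q)) (log 4) := by
  intro x y z w
  have hprod : ρ x y * ρ z w ≤ 4 * max (ρ x z * ρ y w) (ρ x w * ρ y z) := by
    refine mul_le_four_mul_max_of_le_add (hpos x z).le (hpos x w).le (hpos y w).le
      (hpos y z).le (hpos z w).le ?_ ?_ ?_ ?_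
    · simpa only [hsymm z y] using htri x y z
    · simpa only [hsymm w y] using htri x y w
    · simpa only [hsymm z x] using htri z w x
    · simpa only [hsymm z y, add_comm] using htri z w y
  rcases le_total (ρ x z * ρ y w) (ρ x w * ρ y z) with hM | hM
  · rw [max_eq_right hM] at hprod
    exact (two_mul_log_add_two_mul_log_le (hpos _ _) (hpos _ _) (hpos _ _) (hpos _ _)
      hprod).trans (by gcongr; exact le_max_right _ _)
  · rw [max_eq_left hM] at hprod
    exact (two_mul_log_add_two_mul_log_le (hpos _ _) (hpos _ _) (hpos _ _) (hpos _ _)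
      hprod).trans (by gcongr; exact le_max_left _ _)

theorem dist_add_max_le_add {Y : Type*} [PseudoMetricSpace Y] (x y z : Y) {a b c : ℝ}
    (hb : 0 ≤ b) :
    dist x z + max a c ≤ (dist x y + max a b) + (dist y z + max b c) := by
  have hmax : max a c ≤ max a b + max b c :=
    max_le (le_add_of_le_of_nonneg (le_max_left _ _) (hb.trans (le_max_left _ _)))
      (le_add_of_nonneg_of_le (hb.trans (le_max_right _ _)) (le_max_right _ _))
  linarith [dist_triangle x y z]

theorem two_mul_log_div_sqrt_mul {r a b : ℝ} (hr : 0 < r) (ha : 0 < a) (hb : 0 < b) :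
    2 * log (r / sqrt (a * b)) = 2 * log r + -log a + -log b := by
  rw [log_div hr.ne' (sqrt_pos.2 (mul_pos ha hb)).ne', log_sqrt (mul_pos ha hb).le,
    log_mul ha.ne' hb.ne']
  ring

end

/-- The Balogh–Bonk function satisfies the four-point Gromov hyperbolicity condition. -/
theorem balogh_bonk_gromov_hyperbolic {D Y : Type*} [MetricSpace Y]
    (π : D → Y) (h : D → ℝ) (hpos : ∀ p, 0 < h p)
    (g : D → D → ℝ)
    (hg : ∀ p q, g p q =
      2 * Real.log ((dist (π p) (π q) + max (h p) (h q)) / Real.sqrt (h p * h q))) :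
    ∃ δ : ℝ, 0 ≤ δ ∧ ∀ x y z w : D,
      g x y + g z w ≤ max (g x z + g y w) (g x w + g y z) + 2 * δ := by
  set ρ : D → D → ℝ := fun p q => dist (π p) (π q) + max (h p) (h q)
  have hρpos : ∀ p q, 0 < ρ p q := fun p q =>
    add_pos_of_nonneg_of_pos dist_nonneg (lt_max_of_lt_left (hpos p))
  have hρsymm : ∀ p q, ρ p q = ρ q p := fun p q => by simp only [ρ, dist_comm, max_comm]
  have hρtri : ∀ p q r, ρ p q ≤ ρ p r + ρ r q := fun p q r =>
    dist_add_max_le_add (π p) (π r) (π q) (hpos r).le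
  have hg' : g = fun p q => 2 * Real.log (ρ p q) + -Real.log (h p) + -Real.log (h q) := by
    funext p q
    exact (hg p q).trans (two_mul_log_div_sqrt_mul (hρpos p q) (hpos p) (hpos q))
  refine ⟨Real.log 4, Real.log_nonneg (by norm_num), ?_⟩
  rw [hg']
  exact (fourPointCondition_two_mul_log hρpos hρsymm hρtri).add_add fun p => -Real.log (h p)
end

section
/- Let Q be a real quadratic form on ℝ^{2n} and J : ℝ^{2n} → ℝ^{2n} the standard complex structure (J² = −Id). If Q(v) + Q(Jv) > 0 for every nonzero v, then every subspace on which Q is negative definite has dimension at most n. -/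
/-!
If `v ≠ 0` lay in both `W` and `J W`, say `v = J w`, then `Q v < 0` and `Q (J v) = Q (-w) = Q w < 0`,
contradicting `Q v + Q (J v) > 0`. So `W` and `J W` are disjoint subspaces of the same dimension
in a real space of dimension `2n`.
-/

open Module

theorem Submodule.two_mul_finrank_le_of_disjoint_map {K V : Type*} [DivisionRing K]
    [AddCommGroup V] [Module K V] [FiniteDimensional K V] (J : V ≃ₗ[K] V) {W : Submodule K V}
    (hW : Disjoint W (W.map (J : V →ₗ[K] V))) : 2 * finrank K W ≤ finrank K V := by
  simpa [two_mul, J.finrank_map_eq] using Submodule.finrank_add_finrank_le_of_disjoint hW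

theorem QuadraticMap.disjoint_map_of_neg_of_pos_add {R V N : Type*} [CommRing R]
    [AddCommGroup V] [Module R V] [AddCommGroup N] [PartialOrder N] [IsOrderedAddMonoid N]
    [Module R N] {Q : QuadraticMap R V N} {J : V →ₗ[R] V} (hJ : ∀ v, J (J v) = -v)
    (hQ : ∀ v, v ≠ 0 → 0 < Q v + Q (J v)) {W : Submodule R V}
    (hW : ∀ v ∈ W, v ≠ 0 → Q v < 0) : Disjoint W (W.map J) := by
  rw [Submodule.disjoint_def]
  rintro _ hJw ⟨w, hw, rfl⟩
  by_contra hJw0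
  have hw0 : w ≠ 0 := by rintro rfl; simp at hJw0
  have hJJw : Q (J (J w)) < 0 := by rw [hJ, QuadraticMap.map_neg]; exact hW w hw hw0
  exact (hQ (J w) hJw0).not_gt (add_neg (hW _ hJw hJw0) hJJw)

/-- If `Q` is a real quadratic form on `ℝ²ⁿ ≅ ℂⁿ` such that `Q(v) + Q(Jv) > 0` for
every nonzero `v` (`J` being multiplication by `i`), then every subspace on which `Q`
is negative definite has real dimension at most `n`. -/
theorem neg_definite_subspace_dim_le {n : ℕ}
    (Q : QuadraticForm ℝ (EuclideanSpace ℂ (Fin n)))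
    (hQ : ∀ v : EuclideanSpace ℂ (Fin n), v ≠ 0 → 0 < Q v + Q (Complex.I • v)) :
    ∀ W : Submodule ℝ (EuclideanSpace ℂ (Fin n)),
      (∀ v ∈ W, v ≠ 0 → Q v < 0) → Module.finrank ℝ W ≤ n := by
  intro W hW
  let J := (LinearEquiv.smulOfNeZero ℂ (EuclideanSpace ℂ (Fin n)) Complex.I
    Complex.I_ne_zero).restrictScalars ℝ
  have hJ (v : EuclideanSpace ℂ (Fin n)) : J (J v) = -v := by simp [J, smul_smul]
  have hdisj := QuadraticMap.disjoint_map_of_neg_of_pos_add (J := J.toLinearMap) hJ hQ hW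
  have hdim := Submodule.two_mul_finrank_le_of_disjoint_map J hdisj
  rw [finrank_real_of_complex, finrank_euclideanSpace_fin] at hdim
  omega
end
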